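/- Let n ≥ 2 and let h ⊂ so(n) ⋉ g_- ⊂ so(1,n+1) be an indecomposable subalgebra containing g_- (type 2). If S ∈ Hom(V, g) satisfies [X, S(v)] = S(Xv) for all X ∈ h and v ∈ V, then S(e_-) = 0, S(x) ∈ g_- for every x ∈ V_0, S(e_+) ∈ p, and S(x)e_+ = −π_0(S(e_+))·x for all x ∈ V_0; moreover [π_0(h), π_0(S(e_+))] = 0 and π_0(h) annihilates π_-(S(e_+)). -/

import Mathlib

open scoped BigOperators

attribute [local instance 100] LieRing.ofAssociativeRing

/-- Minkowski space `ℝ^{1,n+1}` in a Witt basis, coordinates indexed by `Fin (n+2)`: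
index `0` is `e₋`, indices `1,…,n` are the Euclidean directions, index `n+1` is `e₊`. -/
abbrev Vm (n : ℕ) : Type := Fin (n + 2) → ℝ

def lastIx (n : ℕ) : Fin (n + 2) := Fin.last (n + 1)

def midIx (n : ℕ) (i : Fin n) : Fin (n + 2) := ⟨i.1 + 1, by omega⟩

/-- The Minkowski inner product in the Witt basis. -/
noncomputable def wB (n : ℕ) (u v : Vm n) : ℝ :=
  u 0 * v (lastIx n) + u (lastIx n) * v 0 + ∑ i : Fin n, u (midIx n i) * v (midIx n i)

noncomputable def eMinus (n : ℕ) : Vm n := Pi.single 0 1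
noncomputable def ePlus (n : ℕ) : Vm n := Pi.single (lastIx n) 1
noncomputable def eMid (n : ℕ) (i : Fin n) : Vm n := Pi.single (midIx n i) 1

/-- The embedding `ℝⁿ ≃ V₀ ⊆ V`. -/
noncomputable def vmid (n : ℕ) (c : Fin n → ℝ) : Vm n := ∑ i : Fin n, c i • eMid n i

/-- Membership in `so(1,n+1)`: skew-symmetry with respect to the Minkowski product. -/
def IsSkewB (n : ℕ) (A : Module.End ℝ (Vm n)) : Prop :=
  ∀ u v : Vm n, wB n (A u) v + wB n u (A v) = 0

/-- The element `v̄ ∈ 𝔤₋` associated with `v ∈ ℝⁿ`: `v̄ e₊ = v`, `v̄ eᵢ = -vᵢ e₋`, `v̄ e₋ = 0`. -/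
noncomputable def barE (n : ℕ) (v : Fin n → ℝ) : Module.End ℝ (Vm n) :=
  (LinearMap.proj (lastIx n) : Vm n →ₗ[ℝ] ℝ).smulRight (vmid n v)
    - (∑ i : Fin n, v i • (LinearMap.proj (midIx n i) : Vm n →ₗ[ℝ] ℝ)).smulRight (eMinus n)

/-- The `ℝ`-component of the projection of `X` to `𝔤₀ ≅ ℝ ⊕ so(n)`. -/
noncomputable def piR (n : ℕ) (X : Module.End ℝ (Vm n)) : ℝ :=
  wB n (X (eMinus n)) (ePlus n)

/-- The projection `π₋ : 𝔭 → 𝔤₋ ≅ ℝⁿ`. -/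
noncomputable def piMinusE (n : ℕ) (X : Module.End ℝ (Vm n)) : Fin n → ℝ :=
  fun i => wB n (X (ePlus n)) (eMid n i)

/-- The action of the `𝔤₀ ≅ 𝔠𝔬(n)`-projection `π₀(X)` of `X` on `ℝⁿ`. -/
noncomputable def pi0Act (n : ℕ) (X : Module.End ℝ (Vm n)) (c : Fin n → ℝ) : Fin n → ℝ :=
  fun j => piR n X * c j + ∑ i : Fin n, wB n (X (eMid n i)) (eMid n j) * c i

/-- Membership in the parabolic `𝔭 = stab(ℝ·e₋) ⊆ so(1,n+1)`. -/
def MemP (n : ℕ) (X : Module.End ℝ (Vm n)) : Prop :=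
  IsSkewB n X ∧ X (eMinus n) ∈ Submodule.span ℝ {eMinus n}

/-- Indecomposability: no nondegenerate invariant subspace other than `⊥` and `⊤`. -/
def Indecomp (n : ℕ) (h : LieSubalgebra ℝ (Module.End ℝ (Vm n))) : Prop :=
  ∀ W : Submodule ℝ (Vm n),
    (∀ X ∈ h, ∀ w ∈ W, X w ∈ W) →
    (∀ w ∈ W, (∀ w' ∈ W, wB n w w' = 0) → w = 0) →
    W = ⊥ ∨ W = ⊤

/-! Equivariance under `𝔤₋ ⊆ 𝔥` does most of the work. The centralizer of `𝔤₋` in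
`so(1,n+1)` is `𝔤₋` itself, so `S(e₋) = w̄` for some `w`; comparing diagonal entries of
`[v̄, S(eᵢ)] = -vᵢ S(e₋)` for the skew endomorphisms `S(eᵢ)` forces `w = 0` when `n ≥ 2`.
Then each `S(x)`, `x ∈ V₀`, commutes with `𝔤₋`, hence lies in `𝔤₋`, and evaluating
`[x̄, S(e₊)] = S(x)` at `e₋` and at `e₊` gives `S(e₊) ∈ 𝔭` and the formula for `S(x)e₊`.

For `X ∈ 𝔥`, `[X, S(e₊)] = S(Xe₊)` again lies in `𝔤₋`. Elements of `𝔭` are block upper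
triangular for the flag `ℝe₋ ⊂ e₋^⊥ ⊂ V`, so taking `V₀`-blocks is a Lie algebra homomorphism
on `𝔭` killing `𝔤₋`; this gives `[π₀(X), π₀(S(e₊))] = 0`, and the `V₀`-component of
`[X, S(e₊)]e₊` gives `π₀(X)π₋(S(e₊)) = 0`. -/

lemma Module.End.commutator_apply {R M : Type*} [CommRing R] [AddCommGroup M] [Module R M]
    (X Y : Module.End R M) (u : M) : ⁅X, Y⁆ u = X (Y u) - Y (X u) := by
  simp [Ring.lie_def]

section Coordinates

variable {n : ℕ}

lemma midIx_ne_zero (i : Fin n) : midIx n i ≠ 0 := by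
  simp [midIx, Fin.ext_iff]

lemma midIx_ne_lastIx (i : Fin n) : midIx n i ≠ lastIx n := by
  simp [midIx, lastIx, Fin.ext_iff]; omega

lemma lastIx_ne_zero : lastIx n ≠ 0 := by
  simp [lastIx, Fin.ext_iff]

lemma midIx_injective : Function.Injective (midIx n) := by
  intro i j h; simpa [midIx, Fin.ext_iff] using h

lemma eq_zero_or_midIx_or_lastIx (k : Fin (n + 2)) :
    k = 0 ∨ (∃ i : Fin n, k = midIx n i) ∨ k = lastIx n := by
  rcases k with ⟨k, hk⟩
  rcases Nat.eq_zero_or_pos k with rfl | h0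
  · exact Or.inl rfl
  rcases Nat.lt_or_ge k (n + 1) with h1 | h1
  · exact Or.inr (Or.inl ⟨⟨k - 1, by omega⟩, by simp [midIx, Fin.ext_iff]; omega⟩)
  · exact Or.inr (Or.inr (by simp [lastIx, Fin.ext_iff]; omega))

@[simp] lemma eMinus_zero : eMinus n 0 = 1 := by simp [eMinus]
@[simp] lemma eMinus_midIx (i : Fin n) : eMinus n (midIx n i) = 0 := by
  simp [eMinus, midIx_ne_zero]
@[simp] lemma eMinus_lastIx : eMinus n (lastIx n) = 0 := by
  simp [eMinus, lastIx_ne_zero]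
@[simp] lemma ePlus_zero : ePlus n 0 = 0 := by
  simp [ePlus, lastIx_ne_zero.symm]
@[simp] lemma ePlus_midIx (i : Fin n) : ePlus n (midIx n i) = 0 := by
  simp [ePlus, midIx_ne_lastIx]
@[simp] lemma ePlus_lastIx : ePlus n (lastIx n) = 1 := by simp [ePlus]
@[simp] lemma eMid_zero (i : Fin n) : eMid n i 0 = 0 := by
  simp [eMid, (midIx_ne_zero i).symm]
@[simp] lemma eMid_lastIx (i : Fin n) : eMid n i (lastIx n) = 0 := by
  simp [eMid, (midIx_ne_lastIx i).symm]
@[simp] lemma eMid_midIx (i j : Fin n) : eMid n i (midIx n j) = if j = i then 1 else 0 := by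
  simp [eMid, Pi.single_apply, midIx_injective.eq_iff]

@[simp] lemma vmid_zero (c : Fin n → ℝ) : vmid n c 0 = 0 := by
  simp [vmid, Finset.sum_apply]
@[simp] lemma vmid_lastIx (c : Fin n → ℝ) : vmid n c (lastIx n) = 0 := by
  simp [vmid, Finset.sum_apply]
@[simp] lemma vmid_midIx (c : Fin n → ℝ) (j : Fin n) : vmid n c (midIx n j) = c j := by
  simp [vmid, Finset.sum_apply]

@[simp] lemma wB_eMinus_right (u : Vm n) : wB n u (eMinus n) = u (lastIx n) := by simp [wB]
@[simp] lemma wB_ePlus_right (u : Vm n) : wB n u (ePlus n) = u 0 := by simp [wB]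
@[simp] lemma wB_eMid_right (u : Vm n) (j : Fin n) : wB n u (eMid n j) = u (midIx n j) := by
  simp [wB]
@[simp] lemma wB_ePlus_left (u : Vm n) : wB n (ePlus n) u = u 0 := by simp [wB]
@[simp] lemma wB_eMid_left (u : Vm n) (j : Fin n) : wB n (eMid n j) u = u (midIx n j) := by
  simp [wB]

lemma vm_ext {u v : Vm n} (h0 : u 0 = v 0) (hmid : ∀ i, u (midIx n i) = v (midIx n i))
    (hlast : u (lastIx n) = v (lastIx n)) : u = v := by
  funext k
  rcases eq_zero_or_midIx_or_lastIx k with rfl | ⟨i, rfl⟩ | rfl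
  exacts [h0, hmid i, hlast]

lemma map_vmid {M : Type*} [AddCommMonoid M] [Module ℝ M] (f : Vm n →ₗ[ℝ] M) (c : Fin n → ℝ) :
    f (vmid n c) = ∑ i, c i • f (eMid n i) := by
  simp [vmid]

lemma vmid_neg (c : Fin n → ℝ) : vmid n (-c) = -vmid n c := by
  apply vm_ext <;> simp

lemma eq_smul_eMinus_add_vmid_add_smul_ePlus (u : Vm n) :
    u = u 0 • eMinus n + vmid n (fun i => u (midIx n i)) + u (lastIx n) • ePlus n := by
  apply vm_ext <;> simp

lemma end_ext {f g : Module.End ℝ (Vm n)} (h0 : f (eMinus n) = g (eMinus n))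
    (hmid : ∀ i, f (eMid n i) = g (eMid n i)) (hlast : f (ePlus n) = g (ePlus n)) : f = g := by
  refine LinearMap.ext fun u => ?_
  rw [eq_smul_eMinus_add_vmid_add_smul_ePlus u]
  simp only [map_add, map_smul, map_vmid, h0, hmid, hlast]

lemma barE_apply (v : Fin n → ℝ) (u : Vm n) :
    barE n v u = u (lastIx n) • vmid n v - (∑ i, v i * u (midIx n i)) • eMinus n := by
  simp [barE]

@[simp] lemma barE_eMinus (v : Fin n → ℝ) : barE n v (eMinus n) = 0 := by
  simp [barE_apply]

@[simp] lemma barE_eMid (v : Fin n → ℝ) (j : Fin n) :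
    barE n v (eMid n j) = -(v j • eMinus n) := by
  simp [barE_apply]

@[simp] lemma barE_ePlus (v : Fin n → ℝ) : barE n v (ePlus n) = vmid n v := by
  simp [barE_apply]

lemma barE_zero : barE n 0 = 0 := by
  apply end_ext <;> simp [vmid]

lemma barE_apply_vmid (v c : Fin n → ℝ) :
    barE n v (vmid n c) = -((∑ i, v i * c i) • eMinus n) := by
  simp [barE_apply]

lemma eq_smul_eMinus_of_forall_barE_apply_eq_zero (hn : 1 ≤ n) {u : Vm n}
    (h : ∀ v, barE n v u = 0) : u = u 0 • eMinus n := by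
  have hlast : u (lastIx n) = 0 := by
    simpa [barE_apply] using congrFun (h (Pi.single ⟨0, hn⟩ 1)) (midIx n ⟨0, hn⟩)
  have hmid (k : Fin n) : u (midIx n k) = 0 := by
    simpa [barE_apply, Pi.single_apply] using congrFun (h (Pi.single k 1)) 0
  apply vm_ext <;> simp [hlast, hmid]

lemma IsSkewB.wB_apply {A : Module.End ℝ (Vm n)} (hA : IsSkewB n A) (u v : Vm n) :
    wB n (A u) v = -wB n u (A v) :=
  eq_neg_of_add_eq_zero_left (hA u v)

lemma IsSkewB.lie_barE_single_apply_eMid_zero {B : Module.End ℝ (Vm n)} (hB : IsSkewB n B)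
    (k : Fin n) : ⁅barE n (Pi.single k 1), B⁆ (eMid n k) 0 = B (eMinus n) 0 := by
  have hkk : B (eMid n k) (midIx n k) = 0 := by
    have := hB.wB_apply (eMid n k) (eMid n k); simp at this; linarith
  simp [barE_apply, Pi.single_apply, hkk]

lemma eq_barE_of_forall_lie_barE_eq_zero (hn : 1 ≤ n) {A : Module.End ℝ (Vm n)}
    (hA : IsSkewB n A) (hc : ∀ v, ⁅barE n v, A⁆ = 0) :
    A = barE n (fun i => A (ePlus n) (midIx n i)) := by
  have hcomm (v : Fin n → ℝ) (u : Vm n) : barE n v (A u) = A (barE n v u) := by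
    simpa [Module.End.commutator_apply, sub_eq_zero] using LinearMap.congr_fun (hc v) u
  have hl : A (eMinus n) 0 = 0 := by
    simpa [hc] using (hA.lie_barE_single_apply_eMid_zero ⟨0, hn⟩).symm
  have hA0 : A (eMinus n) = 0 := by
    rw [eq_smul_eMinus_of_forall_barE_apply_eq_zero (u := A (eMinus n)) hn
      fun v => by rw [hcomm, barE_eMinus, map_zero], hl, zero_smul]
  have hAmid (j : Fin n) : A (eMid n j) = A (eMid n j) 0 • eMinus n :=
    eq_smul_eMinus_of_forall_barE_apply_eq_zero hn fun v => by simp [hcomm, hA0]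
  have hAmid0 (j : Fin n) : A (eMid n j) 0 = -A (ePlus n) (midIx n j) := by
    simpa using hA.wB_apply (eMid n j) (ePlus n)
  have hAplus0 : A (ePlus n) 0 = 0 := by
    have := hA.wB_apply (ePlus n) (ePlus n); simp at this; linarith
  have hAplusLast : A (ePlus n) (lastIx n) = 0 := by
    simpa [hA0] using hA.wB_apply (ePlus n) (eMinus n)
  apply end_ext
  · simp [hA0]
  · intro j; rw [hAmid j, hAmid0 j]; simp
  · apply vm_ext <;> simp [hAplus0, hAplusLast]

lemma IsSkewB.apply_ePlus_lastIx {X : Module.End ℝ (Vm n)} (hX : IsSkewB n X) :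
    X (ePlus n) (lastIx n) = -piR n X := by
  simpa [piR] using hX.wB_apply (ePlus n) (eMinus n)

lemma IsSkewB.apply_ePlus_eq_vmid {X : Module.End ℝ (Vm n)} (hX : IsSkewB n X)
    (hX0 : X (eMinus n) = 0) : X (ePlus n) = vmid n (fun i => X (ePlus n) (midIx n i)) := by
  have h0 : X (ePlus n) 0 = 0 := by
    have := hX.wB_apply (ePlus n) (ePlus n); simp at this; linarith
  apply vm_ext <;> simp [h0, hX.apply_ePlus_lastIx, piR, hX0]

lemma IsSkewB.memP {X : Module.End ℝ (Vm n)} (hX : IsSkewB n X) (hX0 : X (eMinus n) = 0) :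
    MemP n X :=
  ⟨hX, by simp [hX0]⟩

end Coordinates

section Equivariant

variable {n : ℕ} {S : Vm n →ₗ[ℝ] Module.End ℝ (Vm n)}

lemma map_eMinus_eq_zero (hn : 2 ≤ n) (hskew : ∀ v, IsSkewB n (S v))
    (hequiv : ∀ v u, ⁅barE n v, S u⁆ = S (barE n v u)) : S (eMinus n) = 0 := by
  set w : Fin n → ℝ := fun i => S (eMinus n) (ePlus n) (midIx n i)
  have hSw : S (eMinus n) = barE n w :=
    eq_barE_of_forall_lie_barE_eq_zero (by omega) (hskew _) fun v => by
      rw [hequiv, barE_eMinus, map_zero]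
  have hdiag (i j : Fin n) : S (eMid n i) (eMinus n) 0 = if j = i then w j else 0 := by
    have := (hskew (eMid n i)).lie_barE_single_apply_eMid_zero j
    rw [hequiv, barE_eMid, map_neg, map_smul, hSw] at this
    rcases eq_or_ne j i with rfl | hji
    · simpa using this.symm
    · simpa [Pi.single_apply, hji, hji.symm] using this.symm
  have hw (i : Fin n) : w i = 0 := by
    have : Nontrivial (Fin n) := Fin.nontrivial_iff_two_le.mpr hn
    obtain ⟨j, hji⟩ := exists_ne i
    simpa [hji] using (hdiag i i).symm.trans (hdiag i j)
  rw [hSw, show w = 0 from funext hw, barE_zero]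

lemma map_vmid_eq_barE (hn : 1 ≤ n) (hskew : ∀ v, IsSkewB n (S v))
    (hequiv : ∀ v u, ⁅barE n v, S u⁆ = S (barE n v u)) (h0 : S (eMinus n) = 0)
    (c : Fin n → ℝ) : S (vmid n c) = barE n (fun i => S (vmid n c) (ePlus n) (midIx n i)) :=
  eq_barE_of_forall_lie_barE_eq_zero hn (hskew _) fun v => by
    rw [hequiv, barE_apply_vmid, map_neg, map_smul, h0, smul_zero, neg_zero]

lemma map_vmid_apply_ePlus_midIx (hskew : ∀ v, IsSkewB n (S v))
    (hequiv : ∀ v u, ⁅barE n v, S u⁆ = S (barE n v u)) (c : Fin n → ℝ) (j : Fin n) :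
    S (vmid n c) (ePlus n) (midIx n j) = -pi0Act n (S (ePlus n)) c j := by
  rw [← barE_ePlus c, ← hequiv, Module.End.commutator_apply]
  simp [barE_apply, (hskew (ePlus n)).apply_ePlus_lastIx, pi0Act, map_vmid, Finset.sum_apply,
    mul_comm]
  ring

lemma map_vmid_eq_barE_neg_pi0Act (hn : 2 ≤ n) (hskew : ∀ v, IsSkewB n (S v))
    (hequiv : ∀ v u, ⁅barE n v, S u⁆ = S (barE n v u)) (c : Fin n → ℝ) :
    S (vmid n c) = barE n (-pi0Act n (S (ePlus n)) c) :=
  (map_vmid_eq_barE (by omega) hskew hequiv (map_eMinus_eq_zero hn hskew hequiv) c).trans <|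
    congrArg (barE n) (funext (map_vmid_apply_ePlus_midIx hskew hequiv c))

lemma memP_map_ePlus (hn : 2 ≤ n) (hskew : ∀ v, IsSkewB n (S v))
    (hequiv : ∀ v u, ⁅barE n v, S u⁆ = S (barE n v u)) : MemP n (S (ePlus n)) := by
  refine ⟨hskew _, ?_⟩
  have hker (v : Fin n → ℝ) : barE n v (S (ePlus n) (eMinus n)) = 0 := by
    have := LinearMap.congr_fun (hequiv v (ePlus n)) (eMinus n)
    rwa [Module.End.commutator_apply, barE_eMinus, map_zero, sub_zero, barE_ePlus,
      map_vmid_eq_barE_neg_pi0Act hn hskew hequiv, barE_eMinus] at this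
  rw [eq_smul_eMinus_of_forall_barE_apply_eq_zero (by omega) hker]
  exact Submodule.smul_mem _ _ (Submodule.mem_span_singleton_self _)

end Equivariant

section Parabolic

variable {n : ℕ}

/-- The `V₀ → V₀` block of an endomorphism of `V`. -/
noncomputable def midBlock (n : ℕ) (X : Module.End ℝ (Vm n)) : Module.End ℝ (Fin n → ℝ) :=
  LinearMap.funLeft ℝ ℝ (midIx n) ∘ₗ X ∘ₗ Fintype.linearCombination ℝ (eMid n)

lemma midBlock_apply (X : Module.End ℝ (Vm n)) (c : Fin n → ℝ) (j : Fin n) :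
    midBlock n X c j = X (vmid n c) (midIx n j) := by
  simp [midBlock, vmid, Fintype.linearCombination_apply]

lemma midBlock_sub (X Y : Module.End ℝ (Vm n)) :
    midBlock n (X - Y) = midBlock n X - midBlock n Y := by
  simp [midBlock, LinearMap.comp_sub, LinearMap.sub_comp]

lemma midBlock_barE (w : Fin n → ℝ) : midBlock n (barE n w) = 0 := by
  refine LinearMap.ext fun c => funext fun j => ?_
  simp [midBlock_apply, barE_apply_vmid]

lemma pi0Act_eq (X : Module.End ℝ (Vm n)) (c : Fin n → ℝ) :
    pi0Act n X c = (piR n X • 1 + midBlock n X) c := by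
  funext j
  simp [pi0Act, midBlock_apply, map_vmid, Finset.sum_apply, mul_comm]

lemma MemP.apply_eMinus {X : Module.End ℝ (Vm n)} (hX : MemP n X) :
    X (eMinus n) = X (eMinus n) 0 • eMinus n := by
  obtain ⟨a, ha⟩ := Submodule.mem_span_singleton.mp hX.2
  simp [← ha]

lemma MemP.apply_vmid_lastIx {X : Module.End ℝ (Vm n)} (hX : MemP n X) (c : Fin n → ℝ) :
    X (vmid n c) (lastIx n) = 0 := by
  have := hX.1.wB_apply (vmid n c) (eMinus n)
  rw [hX.apply_eMinus] at this
  simpa [wB] using this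

lemma MemP.apply_midIx {X : Module.End ℝ (Vm n)} (hX : MemP n X) (u : Vm n) (j : Fin n) :
    X u (midIx n j) =
      midBlock n X (fun i => u (midIx n i)) j + u (lastIx n) * X (ePlus n) (midIx n j) := by
  conv_lhs => rw [eq_smul_eMinus_add_vmid_add_smul_ePlus u]
  simp only [map_add, map_smul, Pi.add_apply, Pi.smul_apply, smul_eq_mul]
  rw [hX.apply_eMinus]
  simp [midBlock_apply]

lemma MemP.midBlock_mul {X Y : Module.End ℝ (Vm n)} (hX : MemP n X) (hY : MemP n Y) :
    midBlock n (X * Y) = midBlock n X * midBlock n Y := by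
  refine LinearMap.ext fun c => funext fun j => ?_
  have hYc : (fun i => Y (vmid n c) (midIx n i)) = midBlock n Y c :=
    funext fun i => (midBlock_apply Y c i).symm
  rw [midBlock_apply, Module.End.mul_apply, Module.End.mul_apply, hX.apply_midIx,
    hY.apply_vmid_lastIx, hYc, zero_mul, add_zero]

lemma MemP.midBlock_lie {X Y : Module.End ℝ (Vm n)} (hX : MemP n X) (hY : MemP n Y) :
    midBlock n ⁅X, Y⁆ = ⁅midBlock n X, midBlock n Y⁆ := by
  rw [Ring.lie_def, Ring.lie_def, midBlock_sub, hX.midBlock_mul hY, hY.midBlock_mul hX]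

lemma MemP.pi0Act_comm_of_lie_eq_barE {X Y : Module.End ℝ (Vm n)} (hX : MemP n X)
    (hY : MemP n Y) {w : Fin n → ℝ} (h : ⁅X, Y⁆ = barE n w) (c : Fin n → ℝ) :
    pi0Act n X (pi0Act n Y c) = pi0Act n Y (pi0Act n X c) := by
  have hXY : Commute (midBlock n X) (midBlock n Y) := by
    rw [commute_iff_lie_eq, ← hX.midBlock_lie hY, h, midBlock_barE]
  have hcomm : Commute (piR n X • 1 + midBlock n X) (piR n Y • 1 + midBlock n Y) :=
    ((Commute.one_left _).smul_left _).add_left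
      (((Commute.one_right _).smul_right _).add_right hXY)
  simp only [pi0Act_eq, ← Module.End.mul_apply, hcomm.eq]

lemma IsSkewB.pi0Act_piMinusE_eq_zero {X E : Module.End ℝ (Vm n)} (hX : IsSkewB n X)
    (hX0 : X (eMinus n) = 0) (hE : MemP n E)
    (h : ⁅X, E⁆ = barE n (-pi0Act n E (fun i => X (ePlus n) (midIx n i)))) :
    pi0Act n X (piMinusE n E) = 0 := by
  have hXlast : X (ePlus n) (lastIx n) = 0 := by
    simpa [piR, hX0] using hX.apply_ePlus_lastIx
  funext j
  have := congrFun (LinearMap.congr_fun h (ePlus n)) (midIx n j)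
  rw [Module.End.commutator_apply, Pi.sub_apply, (hX.memP hX0).apply_midIx, hE.apply_midIx, hXlast,
    hE.1.apply_ePlus_lastIx, barE_ePlus, vmid_midIx, pi0Act_eq] at this
  have hp : piMinusE n E = fun i => E (ePlus n) (midIx n i) :=
    funext fun i => wB_eMid_right _ _
  simp [pi0Act_eq, piR, hX0, hp] at this ⊢
  linarith

end Parabolic

theorem stmt5_general (n : ℕ) (hn : 2 ≤ n) (h : LieSubalgebra ℝ (Module.End ℝ (Vm n)))
    (hsub : ∀ X ∈ h, IsSkewB n X ∧ X (eMinus n) = 0)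
    (hgm : ∀ v : Fin n → ℝ, barE n v ∈ h)
    (S : Vm n →ₗ[ℝ] Module.End ℝ (Vm n))
    (hSskew : ∀ v : Vm n, IsSkewB n (S v))
    (hSeq : ∀ X ∈ h, ∀ v : Vm n, ⁅X, S v⁆ = S (X v)) :
    (S (eMinus n) = 0) ∧
    (∀ c : Fin n → ℝ, ∃ w : Fin n → ℝ, S (vmid n c) = barE n w) ∧
    ((S (ePlus n)) (eMinus n) ∈ Submodule.span ℝ {eMinus n}) ∧
    (∀ c : Fin n → ℝ, (S (vmid n c)) (ePlus n) = - vmid n (pi0Act n (S (ePlus n)) c)) ∧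
    (∀ X ∈ h, ∀ c : Fin n → ℝ,
      pi0Act n X (pi0Act n (S (ePlus n)) c) = pi0Act n (S (ePlus n)) (pi0Act n X c)) ∧
    (∀ X ∈ h, pi0Act n X (piMinusE n (S (ePlus n))) = 0) := by
  have hequiv (v : Fin n → ℝ) (u : Vm n) : ⁅barE n v, S u⁆ = S (barE n v u) :=
    hSeq _ (hgm v) u
  have hSmid := map_vmid_eq_barE_neg_pi0Act hn hSskew hequiv
  have hE : MemP n (S (ePlus n)) := memP_map_ePlus hn hSskew hequiv
  have hXE (X : Module.End ℝ (Vm n)) (hX : X ∈ h) :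
      ⁅X, S (ePlus n)⁆ = barE n (-pi0Act n (S (ePlus n)) fun i => X (ePlus n) (midIx n i)) := by
    rw [hSeq X hX]
    conv_lhs => rw [(hsub X hX).1.apply_ePlus_eq_vmid (hsub X hX).2]
    exact hSmid _
  refine ⟨map_eMinus_eq_zero hn hSskew hequiv, fun c => ⟨_, hSmid c⟩, hE.2,
    fun c => by rw [hSmid c, barE_ePlus, vmid_neg], fun X hX c => ?_, fun X hX => ?_⟩
  · exact ((hsub X hX).1.memP (hsub X hX).2).pi0Act_comm_of_lie_eq_barE hE (hXE X hX) c
  · exact (hsub X hX).1.pi0Act_piMinusE_eq_zero (hsub X hX).2 hE (hXE X hX)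

/-- Let `n ≥ 2` and let `𝔥 ⊆ so(n) ⋉ 𝔤₋ ⊂ so(1,n+1)` be an indecomposable
subalgebra containing `𝔤₋` (type 2). If `S ∈ Hom(V, 𝔤)` satisfies `[X, S(v)] = S(Xv)` for all
`X ∈ 𝔥`, `v ∈ V`, then `S(e₋) = 0`, `S(x) ∈ 𝔤₋` for every `x ∈ V₀`, `S(e₊) ∈ 𝔭`,
`S(x)e₊ = −π₀(S(e₊))·x` for all `x ∈ V₀`; moreover `[π₀(𝔥), π₀(S(e₊))] = 0` and `π₀(𝔥)`
annihilates `π₋(S(e₊))`. -/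
theorem stmt5 (n : ℕ) (hn : 2 ≤ n) (h : LieSubalgebra ℝ (Module.End ℝ (Vm n)))
    (hsub : ∀ X ∈ h, IsSkewB n X ∧ X (eMinus n) = 0)
    (hgm : ∀ v : Fin n → ℝ, barE n v ∈ h)
    (hind : Indecomp n h)
    (S : Vm n →ₗ[ℝ] Module.End ℝ (Vm n))
    (hSskew : ∀ v : Vm n, IsSkewB n (S v))
    (hSeq : ∀ X ∈ h, ∀ v : Vm n, ⁅X, S v⁆ = S (X v)) :
    (S (eMinus n) = 0) ∧
    (∀ c : Fin n → ℝ, ∃ w : Fin n → ℝ, S (vmid n c) = barE n w) ∧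
    ((S (ePlus n)) (eMinus n) ∈ Submodule.span ℝ {eMinus n}) ∧
    (∀ c : Fin n → ℝ, (S (vmid n c)) (ePlus n) = - vmid n (pi0Act n (S (ePlus n)) c)) ∧
    (∀ X ∈ h, ∀ c : Fin n → ℝ,
      pi0Act n X (pi0Act n (S (ePlus n)) c) = pi0Act n (S (ePlus n)) (pi0Act n X c)) ∧
    (∀ X ∈ h, pi0Act n X (piMinusE n (S (ePlus n))) = 0) :=
  stmt5_general n hn h hsub hgm S hSskew hSeq
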